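/- Let K ⊂ E be a compact product with equilibrium state μ, and let φ be a Hausdorff function. If the upper φ-density D̄ = limsup_{ε→0} μ(B(x,ε))/φ(ε) (constant over x ∈ K) satisfies 0 < D̄ < ∞, then the φ-Hausdorff measure of K equals 1/D̄. -/

import Mathlib

open scoped Classical ENNReal
open Filter Topology MeasureTheory

/-- The minimal index (counting from 1) at which two elements of the compact product
`K = ∏_k {1,…,n k}` differ. -/
noncomputable def chiK {n : ℕ → ℕ} (x y : ∀ k, Fin (n k)) : ℕ := sInf {k | x k ≠ y k} + 1

/-- The ultrametric `δ(x,y) = 2^{-χ(x,y)}` on the compact product. -/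
noncomputable def deltaK {n : ℕ → ℕ} (x y : ∀ k, Fin (n k)) : ℝ :=
  if x = y then 0 else (2 : ℝ) ^ (-(chiK x y : ℤ))

/-- The open `δ`-ball of center `x` and radius `ε`. -/
def BallK {n : ℕ → ℕ} (x : ∀ k, Fin (n k)) (ε : ℝ) : Set (∀ k, Fin (n k)) :=
  {y | deltaK x y < ε}

/-- The equilibrium state: the product of the uniform probability measures, characterized
by its values on cylinders. -/
def IsEquilibrium {n : ℕ → ℕ} (μ : Measure (∀ k, Fin (n k))) : Prop :=
  ∀ (k : ℕ) (s : ∀ j, Fin (n j)),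
    μ {y | ∀ j < k, y j = s j} = ∏ j ∈ Finset.range k, ((n j : ℝ≥0∞))⁻¹

/-- Hausdorff functions: continuous nondecreasing, vanishing exactly at `0`. -/
def IsHausdorffFn (φ : ℝ → ℝ) : Prop :=
  ContinuousOn φ (Set.Ici 0) ∧ MonotoneOn φ (Set.Ici 0) ∧ φ 0 = 0 ∧ ∀ ε > 0, 0 < φ ε

/-- The upper `φ`-density of `μ` at `x`. -/
noncomputable def upperDensK {n : ℕ → ℕ} (μ : Measure (∀ k, Fin (n k))) (φ : ℝ → ℝ)
    (x : ∀ k, Fin (n k)) : ℝ≥0∞ :=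
  Filter.limsup (fun ε : ℝ => μ (BallK x ε) / ENNReal.ofReal (φ ε)) (𝓝[>] 0)

/-- The lower `φ`-density of `μ` at `x`. -/
noncomputable def lowerDensK {n : ℕ → ℕ} (μ : Measure (∀ k, Fin (n k))) (φ : ℝ → ℝ)
    (x : ∀ k, Fin (n k)) : ℝ≥0∞ :=
  Filter.liminf (fun ε : ℝ => μ (BallK x ε) / ENNReal.ofReal (φ ε)) (𝓝[>] 0)

/-- The `φ`-Hausdorff measure on the compact product, defined via countable covers by
open balls of radii at most `ε`, letting `ε → 0`. -/
noncomputable def HK {n : ℕ → ℕ} (φ : ℝ → ℝ) (S : Set (∀ k, Fin (n k))) : ℝ≥0∞ :=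
  ⨆ (ε : ℝ) (_ : 0 < ε),
    ⨅ (c : ℕ → (∀ k, Fin (n k)) × ℝ)
      (_ : (∀ i, 0 ≤ (c i).2 ∧ (c i).2 ≤ ε) ∧ S ⊆ ⋃ i, BallK (c i).1 (c i).2),
      ∑' i, ENNReal.ofReal (φ (c i).2)

/-- The `φ`-packing premeasure on the compact product, defined via countable packs by
disjoint open balls centered in the set, of radii at most `ε`, letting `ε → 0`. -/
noncomputable def PK0 {n : ℕ → ℕ} (φ : ℝ → ℝ) (S : Set (∀ k, Fin (n k))) : ℝ≥0∞ :=
  ⨅ (ε : ℝ) (_ : 0 < ε),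
    ⨆ (c : ℕ → (∀ k, Fin (n k)) × ℝ)
      (_ : (∀ i, (c i).1 ∈ S ∧ 0 ≤ (c i).2 ∧ (c i).2 ≤ ε) ∧
        Pairwise fun i j => Disjoint (BallK (c i).1 (c i).2) (BallK (c j).1 (c j).2)),
      ∑' i, ENNReal.ofReal (φ (c i).2)

/-- The `φ`-packing measure on the compact product. -/
noncomputable def PK {n : ℕ → ℕ} (φ : ℝ → ℝ) (S : Set (∀ k, Fin (n k))) : ℝ≥0∞ :=
  ⨅ (F : ℕ → Set (∀ k, Fin (n k))) (_ : S ⊆ ⋃ m, F m), ∑' m, PK0 φ (F m)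

/-!
On `K` the open `δ`-ball of radius `ε` about `x` is the cylinder of the first `m(ε)` coordinates of
`x`, so its `μ`-mass `f(ε)` does not depend on `x`, and `K` is covered by `1 / f(ε)` such balls.
If `a` is below the upper density, some small `t` has `a φ(t) < f(t)`, and the covering by the
`1 / f(t)` balls of radius `t` gives `H^φ(K) ≤ 1/a`. If `b` is above it, then `f(r) ≤ b φ(r)` for
all small `r`, and the mass distribution principle gives `H^φ(K) ≥ μ(K) / b = 1/b`.
-/

open PiNat

section

variable {n : ℕ → ℕ}

lemma ballK_eq_empty_of_nonpos (x : ∀ k, Fin (n k)) {ε : ℝ} (hε : ε ≤ 0) : BallK x ε = ∅ := by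
  refine Set.eq_empty_of_forall_notMem fun y hy => (hy.trans_le hε).not_ge ?_
  unfold deltaK
  split_ifs <;> positivity

lemma deltaK_lt_iff {x y : ∀ k, Fin (n k)} {ε : ℝ} (hε : 0 < ε) :
    deltaK x y < ε ↔ ∀ j : ℕ, ε ≤ (2 : ℝ) ^ (-(j + 1 : ℤ)) → y j = x j := by
  by_cases hxy : x = y
  · simp [deltaK, hxy, hε]
  have hne : {k | x k ≠ y k}.Nonempty := Function.ne_iff.mp hxy
  rw [deltaK, if_neg hxy, chiK]
  push_cast
  constructor
  · intro h j hj
    by_contra hyx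
    have hle : sInf {k | x k ≠ y k} ≤ j := Nat.sInf_le (Ne.symm hyx)
    have : (2 : ℝ) ^ (-(j + 1 : ℤ)) ≤ 2 ^ (-((sInf {k | x k ≠ y k} : ℕ) + 1 : ℤ)) :=
      zpow_le_zpow_right₀ one_le_two (by omega)
    linarith
  · intro h
    by_contra hge
    exact Nat.sInf_mem hne (h _ (not_lt.mp hge)).symm

lemma exists_ballK_eq_cylinder {ε : ℝ} (hε : 0 < ε) :
    ∃ m : ℕ, ∀ x : ∀ k, Fin (n k), BallK x ε = cylinder x m := by
  have hex : ∃ m : ℕ, (2 : ℝ) ^ (-(m + 1 : ℤ)) < ε := by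
    obtain ⟨m, hm⟩ := exists_pow_lt_of_lt_one hε (by norm_num : (2⁻¹ : ℝ) < 1)
    refine ⟨m, lt_of_le_of_lt ?_ hm⟩
    rw [inv_pow, ← zpow_natCast, ← zpow_neg]
    exact zpow_le_zpow_right₀ one_le_two (by omega)
  have hdepth : ∀ j : ℕ, ε ≤ (2 : ℝ) ^ (-(j + 1 : ℤ)) ↔ j < Nat.find hex := by
    intro j
    rw [Nat.lt_find_iff]
    refine ⟨fun h i hi => not_lt.mpr (h.trans (zpow_le_zpow_right₀ one_le_two (by omega))),
      fun h => not_lt.mp (h j le_rfl)⟩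
  refine ⟨Nat.find hex, fun x => Set.ext fun y => ?_⟩
  simp only [BallK, Set.mem_ofPred_eq, deltaK_lt_iff hε, hdepth, mem_cylinder_iff]

lemma exists_finset_cylinder_cover (x : ∀ k, Fin (n k)) (m : ℕ) :
    ∃ s : Finset (∀ k, Fin (n k)), (s.card : ℝ≥0∞) ≤ ∏ j ∈ Finset.range m, (n j : ℝ≥0∞) ∧
      Set.univ ⊆ ⋃ z ∈ s, cylinder z m := by
  let extend : (∀ j : Fin m, Fin (n j)) → ∀ k, Fin (n k) :=
    fun p k => if hk : k < m then p ⟨k, hk⟩ else x k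
  refine ⟨Finset.univ.image extend, ?_, fun y _ => ?_⟩
  · calc ((Finset.univ.image extend).card : ℝ≥0∞)
        ≤ Fintype.card (∀ j : Fin m, Fin (n j)) := by exact_mod_cast Finset.card_image_le
      _ = ∏ j ∈ Finset.range m, (n j : ℝ≥0∞) := by
        simp [Fintype.card_pi, Fin.prod_univ_eq_prod_range (fun j => (n j : ℝ≥0∞)) m]
  · refine Set.mem_biUnion (Finset.mem_image_of_mem extend (Finset.mem_univ (fun j : Fin m => y j))) ?_
    intro j hj
    simp [extend, hj]

variable {μ : Measure (∀ k, Fin (n k))}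

lemma IsEquilibrium.measure_ballK_eq (hμ : IsEquilibrium μ) {ε : ℝ} (hε : 0 < ε)
    (x y : ∀ k, Fin (n k)) : μ (BallK x ε) = μ (BallK y ε) := by
  obtain ⟨m, hm⟩ := exists_ballK_eq_cylinder (n := n) hε
  rw [hm, hm]
  exact (hμ m x).trans (hμ m y).symm

lemma IsEquilibrium.measure_univ (hμ : IsEquilibrium μ) (x : ∀ k, Fin (n k)) :
    μ Set.univ = 1 := by
  simpa using hμ 0 x

lemma IsEquilibrium.exists_finset_ballK_cover (hμ : IsEquilibrium μ) {ε : ℝ} (hε : 0 < ε)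
    (x : ∀ k, Fin (n k)) :
    ∃ s : Finset (∀ k, Fin (n k)), Set.univ ⊆ ⋃ z ∈ s, BallK z ε ∧
      (s.card : ℝ≥0∞) * μ (BallK x ε) ≤ 1 := by
  obtain ⟨m, hm⟩ := exists_ballK_eq_cylinder (n := n) hε
  obtain ⟨s, hcard, hcover⟩ := exists_finset_cylinder_cover x m
  refine ⟨s, by simpa only [hm] using hcover, ?_⟩
  have hn : ∀ j, (n j : ℝ≥0∞) ≠ 0 := fun j => Nat.cast_ne_zero.mpr (x j).pos.ne'
  calc (s.card : ℝ≥0∞) * μ (BallK x ε)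
      ≤ (∏ j ∈ Finset.range m, (n j : ℝ≥0∞)) * ∏ j ∈ Finset.range m, (n j : ℝ≥0∞)⁻¹ := by
        rw [hm, ← hμ m x]
        exact mul_le_mul_left hcard _
    _ = 1 := by
      rw [← Finset.prod_mul_distrib]
      exact Finset.prod_eq_one fun j _ => ENNReal.mul_inv_cancel (hn j) (ENNReal.natCast_ne_top _)

end

section

variable {n : ℕ → ℕ} {φ : ℝ → ℝ}

lemma HK_le_of_finset_covers [Nonempty (∀ k, Fin (n k))] (hφ0 : φ 0 = 0)
    {S : Set (∀ k, Fin (n k))} {A : ℝ≥0∞}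
    (h : ∀ ε > 0, ∃ t ∈ Set.Icc 0 ε, ∃ s : Finset (∀ k, Fin (n k)),
      S ⊆ ⋃ z ∈ s, BallK z t ∧ (s.card : ℝ≥0∞) * ENNReal.ofReal (φ t) ≤ A) :
    HK φ S ≤ A := by
  refine iSup₂_le fun ε hε => ?_
  obtain ⟨t, ⟨ht0, htε⟩, s, hS, hA⟩ := h ε hε
  let c : ℕ → (∀ k, Fin (n k)) × ℝ := fun i =>
    if hi : i < s.card then (s.equivFin.symm ⟨i, hi⟩, t) else (Classical.arbitrary _, 0)
  have hc : (∀ i, 0 ≤ (c i).2 ∧ (c i).2 ≤ ε) ∧ S ⊆ ⋃ i, BallK (c i).1 (c i).2 := by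
    refine ⟨fun i => ?_, fun y hy => ?_⟩
    · by_cases hi : i < s.card <;> simp [c, hi, ht0, htε, hε.le]
    · obtain ⟨z, hz, hyz⟩ := Set.mem_iUnion₂.mp (hS hy)
      refine Set.mem_iUnion.mpr ⟨s.equivFin ⟨z, hz⟩, ?_⟩
      simpa [c] using hyz
  have hsum : ∑' i, ENNReal.ofReal (φ (c i).2) = s.card * ENNReal.ofReal (φ t) := by
    rw [tsum_eq_sum (s := Finset.range s.card) fun i hi => by
      simp [c, Finset.mem_range.not.mp hi, hφ0]]
    rw [Finset.sum_congr rfl (g := fun _ => ENNReal.ofReal (φ t)) fun i hi => by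
      simp [c, Finset.mem_range.mp hi]]
    simp
  exact (iInf₂_le c hc).trans (hsum.trans_le hA)

lemma measure_div_le_HK (μ : Measure (∀ k, Fin (n k))) (S : Set (∀ k, Fin (n k)))
    {b : ℝ≥0∞} {u : ℝ} (hu : 0 < u)
    (h : ∀ x r, 0 < r → r ≤ u → μ (BallK x r) ≤ b * ENNReal.ofReal (φ r)) :
    μ S / b ≤ HK φ S := by
  refine le_iSup₂_of_le u hu (le_iInf₂ fun c hc => ENNReal.div_le_of_le_mul' ?_)
  have hball : ∀ i, μ (BallK (c i).1 (c i).2) ≤ b * ENNReal.ofReal (φ (c i).2) := by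
    intro i
    rcases (hc.1 i).1.eq_or_lt with hr | hr
    · simp [ballK_eq_empty_of_nonpos _ hr.ge]
    · exact h _ _ hr (hc.1 i).2
  calc μ S ≤ μ (⋃ i, BallK (c i).1 (c i).2) := measure_mono hc.2
    _ ≤ ∑' i, μ (BallK (c i).1 (c i).2) := measure_iUnion_le _
    _ ≤ ∑' i, b * ENNReal.ofReal (φ (c i).2) := ENNReal.tsum_le_tsum hball
    _ = b * ∑' i, ENNReal.ofReal (φ (c i).2) := ENNReal.tsum_mul_left

variable {μ : Measure (∀ k, Fin (n k))}

lemma IsEquilibrium.HK_univ_le_inv (hμ : IsEquilibrium μ) (hφ0 : φ 0 = 0)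
    (x : ∀ k, Fin (n k)) {a : ℝ≥0∞} (ha : a < upperDensK μ φ x) :
    HK φ (Set.univ : Set (∀ k, Fin (n k))) ≤ a⁻¹ := by
  have : Nonempty (∀ k, Fin (n k)) := ⟨x⟩
  refine HK_le_of_finset_covers hφ0 fun ε hε => ?_
  have hfreq : ∃ᶠ t in 𝓝[>] 0, a < μ (BallK x t) / ENNReal.ofReal (φ t) :=
    frequently_lt_of_lt_limsup (by isBoundedDefault) ha
  obtain ⟨t, hat, ht0, htε⟩ := (hfreq.and_eventually (Ioo_mem_nhdsGT hε)).exists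
  obtain ⟨s, hs, hcard⟩ := hμ.exists_finset_ballK_cover ht0 x
  refine ⟨t, ⟨ht0.le, htε.le⟩, s, hs, ENNReal.le_inv_iff_mul_le.mpr ?_⟩
  calc (s.card : ℝ≥0∞) * ENNReal.ofReal (φ t) * a
      = s.card * (a * ENNReal.ofReal (φ t)) := by ring
    _ ≤ s.card * μ (BallK x t) := mul_le_mul_right (ENNReal.mul_lt_of_lt_div hat).le _
    _ ≤ 1 := hcard

lemma IsEquilibrium.inv_le_HK_univ (hμ : IsEquilibrium μ) (hφ : ∀ ε > 0, 0 < φ ε)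
    (x : ∀ k, Fin (n k)) {b : ℝ≥0∞} (hb : upperDensK μ φ x < b) :
    b⁻¹ ≤ HK φ (Set.univ : Set (∀ k, Fin (n k))) := by
  have hev : ∀ᶠ r in 𝓝[>] 0, μ (BallK x r) / ENNReal.ofReal (φ r) < b :=
    eventually_lt_of_limsup_lt hb
  obtain ⟨u, hu, hsub⟩ := mem_nhdsGT_iff_exists_Ioc_subset.mp hev
  rw [← one_div, ← hμ.measure_univ x]
  refine measure_div_le_HK μ _ hu fun y r hr hru => ?_
  rw [hμ.measure_ballK_eq hr y x]
  exact (ENNReal.div_le_iff_le_mul (Or.inl (ENNReal.ofReal_pos.mpr (hφ r hr)).ne')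
    (Or.inl ENNReal.ofReal_ne_top)).mp (hsub ⟨hr, hru⟩).le

end

theorem stmt11 (n : ℕ → ℕ) (hn : ∀ k, 0 < n k) (μ : Measure (∀ k, Fin (n k)))
    (hμ : IsEquilibrium μ) (φ : ℝ → ℝ) (hφ : IsHausdorffFn φ)
    (D : ℝ≥0∞) (hD : ∀ x, upperDensK μ φ x = D) :
    HK φ (Set.univ : Set (∀ k, Fin (n k))) = D⁻¹ := by
  let x₀ : ∀ k, Fin (n k) := fun k => ⟨0, hn k⟩
  rw [← hD x₀]
  refine le_antisymm (le_of_forall_gt_imp_ge_of_dense fun c hc => ?_)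
    (le_of_forall_lt_imp_le_of_dense fun c hc => ?_)
  · rw [← inv_inv c]
    exact hμ.HK_univ_le_inv hφ.2.2.1 x₀ (ENNReal.inv_lt_iff_inv_lt.mp hc)
  · rw [← inv_inv c]
    exact hμ.inv_le_HK_univ hφ.2.2.2 x₀ (ENNReal.lt_inv_iff_lt_inv.mp hc)
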